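/- arXiv:2110.07080 — 3 statements merged into one kernel-verified Lean document; each statement's English description precedes it below -/
import Mathlib

section
/- Let w = (10,−1,−5,0,3,4), z = (4,3,0,5,1,−10), w' = (10,−5,−1,3,0,4), z' = (4,0,3,1,5,−10) in ℚ⁶, and set A := w·zᵀ and B := w'·z'ᵀ (6×6 rational matrices). Then A·B = B·A = A² = B² = 0, A and B each have rank 1, and for all nonzero rationals s, t the matrix s·A + t·B has rank 2 and satisfies (s·A + t·B)² = 0. -/
/-! All four products vanish because each of `z, z'` is orthogonal to both `w` and `w'`.
A sum `u vᵀ + u' v'ᵀ` with `u, u'` and `v, v'` independent factors as `U V`, with `U` of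
independent columns and `V` of independent rows, so it has rank two; and
`s • A + t • B = (s • w) zᵀ + (t • w') z'ᵀ` is of this form, the independence being visible in
coordinates 3, 4 resp. 1, 2. -/

open Matrix

namespace Matrix

theorem vecMulVec_mul_vecMulVec_of_dotProduct_eq_zero {R l m n : Type*} [CommSemiring R]
    [Fintype m] (u : l → R) {v w : m → R} (x : n → R) (h : v ⬝ᵥ w = 0) :
    vecMulVec u v * vecMulVec w x = 0 := by
  rw [vecMulVec_mul_vecMulVec, h, zero_smul]
  exact ext fun _ _ => mul_zero _

theorem vecMulVec_add_vecMulVec_eq_mul {R m n : Type*} [CommSemiring R]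
    (u u' : m → R) (v v' : n → R) :
    vecMulVec u v + vecMulVec u' v' = (of ![u, u'])ᵀ * of ![v, v'] := by
  ext i j
  simp [mul_apply, Fin.sum_univ_two, vecMulVec_apply]

variable {K m n k : Type*} [Field K] [Fintype m] [Fintype n]

theorem rank_mul_of_linearIndependent [Fintype k] {U : Matrix m k K} {V : Matrix k n K}
    (hU : LinearIndependent K Uᵀ) (hV : LinearIndependent K V) :
    (U * V).rank = Fintype.card k := by
  have hV_surj : LinearMap.range V.mulVecLin = ⊤ := by
    apply Submodule.eq_top_of_finrank_eq
    rw [Module.finrank_fintype_fun_eq_card]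
    exact hV.rank_matrix
  rw [rank, mulVecLin_mul, LinearMap.range_comp_of_range_eq_top _ hV_surj, ← rank,
    ← rank_transpose]
  exact hU.rank_matrix

theorem rank_vecMulVec_of_ne_zero {u : m → K} {v : n → K} (hu : u ≠ 0) (hv : v ≠ 0) :
    (vecMulVec u v).rank = 1 := by
  rw [vecMulVec_eq Unit, rank_mul_of_linearIndependent, Fintype.card_unit]
  · rw [transpose_replicateCol]
    exact linearIndependent_unique_iff.mpr hu
  · exact linearIndependent_unique_iff.mpr hv

theorem rank_vecMulVec_add_vecMulVec {u u' : m → K} {v v' : n → K}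
    (hu : LinearIndependent K ![u, u']) (hv : LinearIndependent K ![v, v']) :
    (vecMulVec u v + vecMulVec u' v').rank = 2 := by
  rw [vecMulVec_add_vecMulVec_eq_mul]
  exact rank_mul_of_linearIndependent hu hv

end Matrix

theorem LinearIndependent.pair_smul {K V : Type*} [Field K] [AddCommGroup V] [Module K V]
    {x y : V} (h : LinearIndependent K ![x, y]) {s t : K} (hs : s ≠ 0) (ht : t ≠ 0) :
    LinearIndependent K ![s • x, t • y] := by
  convert h.units_smul ![Units.mk0 s hs, Units.mk0 t ht] using 1
  ext i : 1
  fin_cases i <;> rfl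

theorem sq_smul_add_smul_eq_zero {R A : Type*} [CommSemiring R] [Semiring A] [Algebra R A]
    {a b : A} (hab : a * b = 0) (hba : b * a = 0) (haa : a * a = 0) (hbb : b * b = 0) (s t : R) :
    (s • a + t • b) ^ 2 = 0 := by
  simp [sq, add_mul, mul_add, hab, hba, haa, hbb]

/-- The rank-one monodromy logarithms at the node `p₃` (eq. (5.11)): each generator is of
type I₁ (rank one, square zero), products vanish, and every interior element
`s·A + t·B` (`s,t ≠ 0`) is of type I₂ (rank two, square zero). -/
theorem stmt_9 (w z w' z' : Fin 6 → ℚ)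
    (hw : w = ![10, -1, -5, 0, 3, 4]) (hz : z = ![4, 3, 0, 5, 1, -10])
    (hw' : w' = ![10, -5, -1, 3, 0, 4]) (hz' : z' = ![4, 0, 3, 1, 5, -10])
    (A B : Matrix (Fin 6) (Fin 6) ℚ)
    (hA : A = vecMulVec w z) (hB : B = vecMulVec w' z') :
    A * B = 0 ∧ B * A = 0 ∧ A * A = 0 ∧ B * B = 0 ∧ A.rank = 1 ∧ B.rank = 1 ∧
      ∀ s t : ℚ, s ≠ 0 → t ≠ 0 →
        (s • A + t • B).rank = 2 ∧ (s • A + t • B) ^ 2 = 0 := by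
  subst hA hB
  obtain ⟨hzw', hz'w, hzw, hz'w'⟩ :
      z ⬝ᵥ w' = 0 ∧ z' ⬝ᵥ w = 0 ∧ z ⬝ᵥ w = 0 ∧ z' ⬝ᵥ w' = 0 := by
    subst hw hz hw' hz'
    norm_num [dotProduct, Fin.sum_univ_succ]
  have hAB := vecMulVec_mul_vecMulVec_of_dotProduct_eq_zero w z' hzw'
  have hBA := vecMulVec_mul_vecMulVec_of_dotProduct_eq_zero w' z hz'w
  have hAA := vecMulVec_mul_vecMulVec_of_dotProduct_eq_zero w z hzw
  have hBB := vecMulVec_mul_vecMulVec_of_dotProduct_eq_zero w' z' hz'w'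
  have hw_indep : LinearIndependent ℚ ![w, w'] := by
    refine LinearIndependent.pair_iff.mpr fun s t h => ?_
    have h3 := congrFun h 3
    have h4 := congrFun h 4
    simp [hw, hw'] at h3 h4
    exact ⟨h4, h3⟩
  have hz_indep : LinearIndependent ℚ ![z, z'] := by
    refine LinearIndependent.pair_iff.mpr fun s t h => ?_
    have h1 := congrFun h 1
    have h2 := congrFun h 2
    simp [hz, hz'] at h1 h2
    exact ⟨h1, h2⟩
  refine ⟨hAB, hBA, hAA, hBB,
    rank_vecMulVec_of_ne_zero (hw_indep.ne_zero 0) (hz_indep.ne_zero 0),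
    rank_vecMulVec_of_ne_zero (hw_indep.ne_zero 1) (hz_indep.ne_zero 1),
    fun s t hs ht => ⟨?_, sq_smul_add_smul_eq_zero hAB hBA hAA hBB s t⟩⟩
  rw [← smul_vecMulVec, ← smul_vecMulVec]
  exact rank_vecMulVec_add_vecMulVec (hw_indep.pair_smul hs ht) hz_indep
end

section
/- Let N' be the 6×6 rational matrix with rows (0,2,1,1,0,0), (−2,0,1,1,0,0), (1,1,0,0,0,1), (1,1,0,0,0,−1), (0,0,1,−1,0,0), (0,0,0,0,0,0), and let u₁ := 3e₁ − i·e₂ + 2e₃ + 2e₄ and u₂ := e₆ in ℂ⁶ (e₁,…,e₆ the standard basis, i the imaginary unit). Extend Q_w ℂ-bilinearly, i.e., Q_w(x,y) := xᵀ·Q_w·y for x, y ∈ ℂ⁶, and let conj denote componentwise complex conjugation. Then for every real number y: −Q_w(exp(i·y·N')·u₁, conj(exp(i·y·N')·u₁)) = 2·(2y+1)², −Q_w(exp(i·y·N')·u₂, conj(exp(i·y·N')·u₂)) = 4·y², and Q_w(exp(i·y·N')·u₁, conj(exp(i·y·N')·u₂)) = 0, where exp denotes the matrix exponential. -/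
/-!
`N'` is nilpotent with `N' ^ 3 = 0`, so `exp (s • N') = 1 + s • N' + (s ^ 2 / 2) • N' ^ 2` and the
orbits `exp (s • N') *ᵥ uⱼ` are explicit vectors whose entries are quadratic in `s`. At `s = i y`
the three Hodge–Riemann quantities become polynomial identities in `y`.
-/

open Matrix NormedSpace

/-- The form `Q_w` of Watanabe's (2,2,2) example, as a complex matrix. -/
def QwC : Matrix (Fin 6) (Fin 6) ℂ :=
  !![-1, 0, 0, 0, 0, 0;
     0, -1, 0, 0, 0, 0;
     0, 0, 0, 1, 0, 0;
     0, 0, 1, 0, 0, 0;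
     0, 0, 0, 0, 0, 1;
     0, 0, 0, 0, 1, 0]

/-- The ℂ-bilinear extension of `Q_w`: `Q_w(x,y) = xᵀ·Q_w·y`. -/
noncomputable def Qwbil (x y : Fin 6 → ℂ) : ℂ := x ⬝ᵥ (QwC *ᵥ y)

/-- The matrix `N'` of Appendix A.1. -/
def N' : Matrix (Fin 6) (Fin 6) ℂ :=
  !![0, 2, 1, 1, 0, 0;
     -2, 0, 1, 1, 0, 0;
     1, 1, 0, 0, 0, 1;
     1, 1, 0, 0, 0, -1;
     0, 0, 1, -1, 0, 0;
     0, 0, 0, 0, 0, 0]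

/-- `u₁ = 3e₁ − i e₂ + 2e₃ + 2e₄`. -/
def u1 : Fin 6 → ℂ := ![3, -Complex.I, 2, 2, 0, 0]

/-- `u₂ = e₆`. -/
def u2 : Fin 6 → ℂ := ![0, 0, 0, 0, 0, 1]

open Complex (I)

theorem NormedSpace.exp_eq_isNilpotent_exp {𝔸 : Type*} [Ring 𝔸] [Algebra ℚ 𝔸]
    [TopologicalSpace 𝔸] [IsTopologicalRing 𝔸] {a : 𝔸} (ha : IsNilpotent a) :
    exp a = IsNilpotent.exp a := by
  obtain ⟨k, hk⟩ := ha
  rw [IsNilpotent.exp_eq_sum hk, exp_eq_tsum_rat]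
  exact tsum_eq_sum fun n hn ↦ by
    rw [pow_eq_zero_of_le (by simpa using hn) hk, smul_zero]

theorem N'_pow_three : N' ^ 3 = 0 := by
  norm_num [pow_three, N', cons_mul, vecMul_cons, ← zero_empty]

theorem exp_smul_N' (s : ℂ) : exp (s • N') = 1 + s • N' + (s ^ 2 / 2) • N' ^ 2 := by
  have h3 : (s • N') ^ 3 = 0 := by rw [smul_pow, N'_pow_three, smul_zero]
  rw [NormedSpace.exp_eq_isNilpotent_exp ⟨3, h3⟩, IsNilpotent.exp_eq_sum h3]
  simp only [Finset.sum_range_succ, Finset.range_zero, Finset.sum_empty, smul_pow,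
    ← Rat.cast_smul_eq_qsmul ℂ, smul_smul]
  norm_num [div_eq_inv_mul]

theorem exp_smul_N'_mulVec (s : ℂ) (v : Fin 6 → ℂ) :
    exp (s • N') *ᵥ v = v + s • N' *ᵥ v + (s ^ 2 / 2) • N' *ᵥ N' *ᵥ v := by
  rw [exp_smul_N', add_mulVec, add_mulVec, one_mulVec, smul_mulVec, smul_mulVec,
    pow_two N', ← mulVec_mulVec]

theorem N'_mulVec_u1 : N' *ᵥ u1 = ![4 - 2 * I, -2, 3 - I, 3 - I, 0, 0] := by
  ext i; fin_cases i <;> simp [N', u1, mulVec, dotProduct, Fin.sum_univ_six] <;> ring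

theorem N'_mulVec_N'_mulVec_u1 :
    N' *ᵥ N' *ᵥ u1 = ![2 - 2 * I, -2 + 2 * I, 2 - 2 * I, 2 - 2 * I, 0, 0] := by
  rw [N'_mulVec_u1]
  ext i; fin_cases i <;> simp [N', mulVec, dotProduct, Fin.sum_univ_six] <;> ring

theorem N'_mulVec_u2 : N' *ᵥ u2 = ![0, 0, 1, -1, 0, 0] := by
  ext i; fin_cases i <;> simp [N', u2, mulVec, dotProduct, Fin.sum_univ_six]

theorem N'_mulVec_N'_mulVec_u2 : N' *ᵥ N' *ᵥ u2 = ![0, 0, 0, 0, 2, 0] := by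
  rw [N'_mulVec_u2]
  ext i; fin_cases i <;> simp [N', mulVec, dotProduct, Fin.sum_univ_six, one_add_one_eq_two]

theorem exp_smul_N'_mulVec_u1 (s : ℂ) : exp (s • N') *ᵥ u1 =
    ![3 + (4 - 2 * I) * s + (1 - I) * s ^ 2, -I - 2 * s + (-1 + I) * s ^ 2,
      2 + (3 - I) * s + (1 - I) * s ^ 2, 2 + (3 - I) * s + (1 - I) * s ^ 2, 0, 0] := by
  rw [exp_smul_N'_mulVec, N'_mulVec_N'_mulVec_u1, N'_mulVec_u1]
  ext i; fin_cases i <;> simp [u1] <;> ring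

theorem exp_smul_N'_mulVec_u2 (s : ℂ) : exp (s • N') *ᵥ u2 = ![0, 0, s, -s, s ^ 2, 1] := by
  rw [exp_smul_N'_mulVec, N'_mulVec_N'_mulVec_u2, N'_mulVec_u2]
  ext i; fin_cases i <;> simp [u2]

theorem Qwbil_apply (x y : Fin 6 → ℂ) :
    Qwbil x y = -(x 0 * y 0) - x 1 * y 1 + x 2 * y 3 + x 3 * y 2 + x 4 * y 5 + x 5 * y 4 := by
  simp [Qwbil, QwC, mulVec, dotProduct, Fin.sum_univ_six]
  ring

/-- The Hodge–Riemann positivity identities of Appendix A.1 for the second nilpotent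
orbit generated by `N₁ + N₂` and `N'`: for every real `y`,
`−Q_w(e^{iyN'}u₁, conj(e^{iyN'}u₁)) = 2(2y+1)²`,
`−Q_w(e^{iyN'}u₂, conj(e^{iyN'}u₂)) = 4y²`, and
`Q_w(e^{iyN'}u₁, conj(e^{iyN'}u₂)) = 0`. -/
theorem stmt_13 (y : ℝ) :
    -(Qwbil (exp ((Complex.I * (y : ℂ)) • N') *ᵥ u1)
        (star (exp ((Complex.I * (y : ℂ)) • N') *ᵥ u1)))
      = 2 * (2 * (y : ℂ) + 1) ^ 2 ∧
    -(Qwbil (exp ((Complex.I * (y : ℂ)) • N') *ᵥ u2)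
        (star (exp ((Complex.I * (y : ℂ)) • N') *ᵥ u2)))
      = 4 * (y : ℂ) ^ 2 ∧
    Qwbil (exp ((Complex.I * (y : ℂ)) • N') *ᵥ u1)
        (star (exp ((Complex.I * (y : ℂ)) • N') *ᵥ u2)) = 0 := by
  rw [exp_smul_N'_mulVec_u1, exp_smul_N'_mulVec_u2]
  refine ⟨?_, ?_, ?_⟩ <;> apply Complex.ext <;> simp [Qwbil_apply, pow_two] <;> ring
end

section
/- Let N be the 6×6 rational matrix whose only nonzero entries are N₁₂ = −1, N₁₃ = −1, N₂₄ = −22, N₂₅ = −13, N₃₄ = −13, N₃₅ = −22, N₄₆ = 1, N₅₆ = 1 (a nilpotent matrix, so exp(N) is a polynomial in N). Then for every complex number a₀, with v := a₀·e₁ + e₆ in ℂ⁶ (e₁,…,e₆ the standard basis): (N_x·exp(N)·v)ᵀ · Q · (exp(N)·N_x·v) = 2; in particular this pairing is nonzero. -/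
/-!
Since `N⁴ = 0`, `exp N = 1 + N + N²/2 + N³/6` is an explicit unipotent matrix, and the pairing
is a finite computation. The parameter `a₀` drops out because `N_x e₁ = 0` and the first
column of `exp N` is `e₁`: one finds `N_x exp(N) v = (35/2, -15, -20, 0, 1, 0)` and
`exp(N) N_x v = exp(N) e₅ = (35/2, -13, -22, 0, 1, 0)`, whose `Q`-pairing is `15 - 13 = 2`.
-/

open Matrix NormedSpace

/-- The symplectic form `Q` of the (1,2,2,1) family (eq. (5.3)), as a complex matrix. -/
def QC : Matrix (Fin 6) (Fin 6) ℂ :=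
  !![0, 0, 0, 0, 0, -1;
     0, 0, 0, 0, -1, 0;
     0, 0, 0, -1, 0, 0;
     0, 0, 1, 0, 0, 0;
     0, 1, 0, 0, 0, 0;
     1, 0, 0, 0, 0, 0]

/-- The monodromy logarithm `N_x` (modulo weight-filtration level, eq. (6.6)). -/
def NxC : Matrix (Fin 6) (Fin 6) ℂ :=
  !![0, -1, 0, 0, 0, 0;
     0, 0, 0, -10, -5, 0;
     0, 0, 0, -10, -10, 0;
     0, 0, 0, 0, 0, 0;
     0, 0, 0, 0, 0, 1;
     0, 0, 0, 0, 0, 0]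

/-- The nilpotent matrix `N` of eq. (8.14). -/
def NC : Matrix (Fin 6) (Fin 6) ℂ :=
  !![0, -1, -1, 0, 0, 0;
     0, 0, 0, -22, -13, 0;
     0, 0, 0, -13, -22, 0;
     0, 0, 0, 0, 0, 1;
     0, 0, 0, 0, 0, 1;
     0, 0, 0, 0, 0, 0]

theorem NormedSpace.exp_eq_sum_range_of_pow_eq_zero (𝕂 : Type*) {𝔸 : Type*} [Field 𝕂] [CharZero 𝕂]
    [Ring 𝔸] [Algebra 𝕂 𝔸] [TopologicalSpace 𝔸] [IsTopologicalRing 𝔸] {a : 𝔸} {k : ℕ}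
    (h : a ^ k = 0) : exp a = ∑ n ∈ Finset.range k, (n.factorial⁻¹ : 𝕂) • a ^ n := by
  rw [exp_eq_tsum 𝕂]
  exact tsum_eq_sum fun n hn => by
    rw [pow_eq_zero_of_le (not_lt.mp (Finset.mem_range.not.mp hn)) h, smul_zero]

lemma NC_sq : NC ^ 2 =
    !![0, 0, 0, 35, 35, 0;
       0, 0, 0, 0, 0, -35;
       0, 0, 0, 0, 0, -35;
       0, 0, 0, 0, 0, 0;
       0, 0, 0, 0, 0, 0;
       0, 0, 0, 0, 0, 0] := by
  rw [sq]; ext i j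
  fin_cases i <;> fin_cases j <;> norm_num [NC, mul_apply, Fin.sum_univ_succ]

lemma NC_pow_three : NC ^ 3 =
    !![0, 0, 0, 0, 0, 70;
       0, 0, 0, 0, 0, 0;
       0, 0, 0, 0, 0, 0;
       0, 0, 0, 0, 0, 0;
       0, 0, 0, 0, 0, 0;
       0, 0, 0, 0, 0, 0] := by
  rw [pow_succ, NC_sq]; ext i j
  fin_cases i <;> fin_cases j <;> norm_num [NC, mul_apply, Fin.sum_univ_succ]

lemma NC_pow_four : NC ^ 4 = 0 := by
  rw [pow_succ, NC_pow_three]; ext i j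
  fin_cases i <;> fin_cases j <;> simp [NC, mul_apply, Fin.sum_univ_succ]

lemma exp_NC : exp NC =
    !![1, -1, -1, 35/2, 35/2, 35/3;
       0, 1, 0, -22, -13, -35/2;
       0, 0, 1, -13, -22, -35/2;
       0, 0, 0, 1, 0, 1;
       0, 0, 0, 0, 1, 1;
       0, 0, 0, 0, 0, 1] := by
  rw [exp_eq_sum_range_of_pow_eq_zero ℂ NC_pow_four]
  simp only [Finset.sum_range_succ, Finset.sum_range_zero, NC_sq, NC_pow_three]
  ext i j
  fin_cases i <;> fin_cases j <;> norm_num [NC, one_apply]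

/-- Appendix A.2: for every `a₀ ∈ ℂ` and `v = a₀e₁ + e₆`, the pairing
`(N_x·exp(N)·v)ᵀ·Q·(exp(N)·N_x·v)` equals `2`; in particular it is nonzero, so Griffiths
transversality fails for `exp(ℂN_x)F_N•`. -/
theorem stmt_15 (a₀ : ℂ) (v : Fin 6 → ℂ) (hv : v = ![a₀, 0, 0, 0, 0, 1]) :
    ((NxC * exp NC) *ᵥ v) ⬝ᵥ (QC *ᵥ ((exp NC * NxC) *ᵥ v)) = 2 ∧
      ((NxC * exp NC) *ᵥ v) ⬝ᵥ (QC *ᵥ ((exp NC * NxC) *ᵥ v)) ≠ 0 := by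
  have hleft : (NxC * exp NC) *ᵥ v = ![35/2, -15, -20, 0, 1, 0] := by
    rw [hv, exp_NC, ← mulVec_mulVec]
    ext i; fin_cases i <;> norm_num [NxC, mulVec, dotProduct, Fin.sum_univ_succ]
  have hright : (exp NC * NxC) *ᵥ v = ![35/2, -13, -22, 0, 1, 0] := by
    rw [hv, exp_NC, ← mulVec_mulVec]
    ext i; fin_cases i <;> norm_num [NxC, mulVec, dotProduct, Fin.sum_univ_succ]
  have hpairing : ((NxC * exp NC) *ᵥ v) ⬝ᵥ (QC *ᵥ ((exp NC * NxC) *ᵥ v)) = 2 := by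
    rw [hleft, hright]
    norm_num [QC, mulVec, dotProduct, Fin.sum_univ_succ]
  exact ⟨hpairing, hpairing ▸ two_ne_zero⟩
end
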